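/- arXiv:1502.05965 — 3 statements merged into one kernel-verified Lean document; each statement's English description precedes it below -/
import Mathlib

section
/- Let p be an odd prime. Every nonabelian group of order p^3 is isomorphic either to the Heisenberg group Heis(p) or to the semidirect product M(p); in other words, up to isomorphism there are precisely two nonabelian groups of order p^3. -/
/-- The Heisenberg group: upper unitriangular 3×3 matrices over `ZMod p`. -/
def Heis (p : ℕ) : Type :=
  {M : Matrix (Fin 3) (Fin 3) (ZMod p) //
    M 0 0 = 1 ∧ M 1 1 = 1 ∧ M 2 2 = 1 ∧ M 1 0 = 0 ∧ M 2 0 = 0 ∧ M 2 1 = 0}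

namespace Heis

variable {p : ℕ}

instance : Mul (Heis p) :=
  ⟨fun M N => ⟨M.1 * N.1, by
    obtain ⟨a1, a2, a3, a4, a5, a6⟩ := M.2
    obtain ⟨b1, b2, b3, b4, b5, b6⟩ := N.2
    refine ⟨?_, ?_, ?_, ?_, ?_, ?_⟩ <;>
      simp [Matrix.mul_apply, Fin.sum_univ_three, a1, a2, a3, a4, a5, a6,
        b1, b2, b3, b4, b5, b6]⟩⟩

instance : One (Heis p) :=
  ⟨⟨1, by refine ⟨?_, ?_, ?_, ?_, ?_, ?_⟩ <;> simp [Matrix.one_apply]⟩⟩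

instance : Inv (Heis p) :=
  ⟨fun M => ⟨!![1, -(M.1 0 1), M.1 0 1 * M.1 1 2 - M.1 0 2;
               0, 1, -(M.1 1 2);
               0, 0, 1], by
    refine ⟨?_, ?_, ?_, ?_, ?_, ?_⟩ <;>
      simp [Matrix.cons_val_zero, Matrix.cons_val_one, Matrix.head_cons,
        Matrix.vecHead, Matrix.vecTail]⟩⟩

theorem mul_val (M N : Heis p) : (M * N).1 = M.1 * N.1 := rfl

theorem one_val : ((1 : Heis p)).1 = 1 := rfl

theorem inv_val (M : Heis p) :
    (M⁻¹).1 = !![1, -(M.1 0 1), M.1 0 1 * M.1 1 2 - M.1 0 2;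
                 0, 1, -(M.1 1 2);
                 0, 0, 1] := rfl

instance : Group (Heis p) :=
  Group.ofLeftAxioms
    (fun M N K => Subtype.ext (by rw [mul_val, mul_val, mul_val, mul_val, mul_assoc]))
    (fun M => Subtype.ext (by rw [mul_val, one_val, one_mul]))
    (fun M => by
      apply Subtype.ext
      rw [mul_val, inv_val, one_val]
      obtain ⟨M, a1, a2, a3, a4, a5, a6⟩ := M
      ext i j
      fin_cases i <;> fin_cases j <;>
        simp [Matrix.mul_apply, Fin.sum_univ_three, Matrix.one_apply,
          a1, a2, a3, a4, a5, a6] <;> ring)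

end Heis

/-- Underlying carrier of the group `M(p) = (ZMod p²) ⋊ (ZMod p)`. -/
@[ext]
structure Mp (p : ℕ) where
  fst : ZMod (p ^ 2)
  snd : ZMod p

namespace Mp

/-- The action constant: `k : ZMod p` acts on `ZMod p²` by multiplication by `(1+p)^k`. -/
def e (p : ℕ) (k : ZMod p) : ZMod (p ^ 2) := (1 + (p : ZMod (p ^ 2))) ^ k.val

theorem sq_zero_pow {R : Type*} [CommRing R] (x : R) (h : x * x = 0) :
    ∀ n : ℕ, (1 + x) ^ n = 1 + (n : R) * x := by
  intro n
  induction n with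
  | zero => simp
  | succ n ih =>
    rw [pow_succ, ih]
    push_cast
    linear_combination ((n : R)) * h

theorem p_sq_zero (p : ℕ) : ((p : ZMod (p ^ 2))) * (p : ZMod (p ^ 2)) = 0 := by
  have : (((p ^ 2 : ℕ)) : ZMod (p ^ 2)) = 0 := ZMod.natCast_self _
  push_cast at this
  linear_combination this

theorem one_add_p_pow_p (p : ℕ) : (1 + (p : ZMod (p ^ 2))) ^ p = 1 := by
  rw [sq_zero_pow _ (p_sq_zero p) p]
  have := p_sq_zero p
  linear_combination this

theorem pow_val_mod (p m : ℕ) : (1 + (p : ZMod (p ^ 2))) ^ m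
    = (1 + (p : ZMod (p ^ 2))) ^ (m % p) := by
  conv_lhs => rw [← Nat.div_add_mod m p]
  rw [pow_add, pow_mul, one_add_p_pow_p, one_pow, one_mul]

theorem e_add (p : ℕ) (k l : ZMod p) : e p (k + l) = e p k * e p l := by
  rcases p with _ | n
  · simp [e]
  · rw [e, e, e, ← pow_add, ZMod.val_add, ← pow_val_mod]



instance {p : ℕ} : Mul (Mp p) :=
  ⟨fun x y => ⟨x.fst + e p x.snd * y.fst, x.snd + y.snd⟩⟩

instance {p : ℕ} : One (Mp p) := ⟨⟨0, 0⟩⟩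

instance {p : ℕ} : Inv (Mp p) := ⟨fun x => ⟨-(e p (-x.snd) * x.fst), -x.snd⟩⟩

theorem mul_def {p : ℕ} (x y : Mp p) :
    x * y = ⟨x.fst + e p x.snd * y.fst, x.snd + y.snd⟩ := rfl

theorem one_def {p : ℕ} : (1 : Mp p) = ⟨0, 0⟩ := rfl

theorem inv_def {p : ℕ} (x : Mp p) : x⁻¹ = ⟨-(e p (-x.snd) * x.fst), -x.snd⟩ := rfl

instance {p : ℕ} : Group (Mp p) :=
  Group.ofLeftAxioms
    (fun x y z => by
      simp only [mul_def, e_add]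
      ext <;> dsimp <;> ring)
    (fun x => by
      ext <;> simp [mul_def, one_def, e])
    (fun x => by
      ext <;> simp [mul_def, inv_def, one_def])

end Mp

/-!
The center `Z` of a nonabelian group `G` of order `p ^ 3` has order `p` and `G ⧸ Z` is
noncyclic of order `p ^ 2`, so commutators and `p`-th powers are central, elements of `Z` have
order `p`, and for odd `p` the map `x ↦ x ^ p` is a homomorphism (the correction term
`⁅y, x⁆ ^ (p.choose 2)` vanishes).

If `G` has exponent `p`, two noncommuting elements `a`, `b` and `c = ⁅a, b⁆` satisfy the
defining relations of `Heis p`. Otherwise some `a` has order `p ^ 2` and `Z = ⟨a ^ p⟩`; a power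
of any `g` not commuting with `a` has commutator exactly `a ^ p` with `a`, and correcting it by
a power of `a` gives `b` of order `p` with `b a b⁻¹ = a ^ (1 + p)`, the relations of `Mp p`.
In both cases the relations give a homomorphism onto `G`, since its image contains two
noncommuting elements while subgroups of order at most `p ^ 2` are abelian; counting makes it
an isomorphism.
-/

open scoped commutatorElement

section GroupLemmas

variable {G : Type*} [Group G]

theorem pow_eq_pow_of_natCast_eq {g : G} {n s t : ℕ} (hg : g ^ n = 1)
    (hst : (s : ZMod n) = t) : g ^ s = g ^ t :=
  pow_eq_pow_iff_modEq.mpr (((ZMod.natCast_eq_natCast_iff s t n).mp hst).of_dvd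
    (orderOf_dvd_of_pow_eq_one hg))

theorem SemiconjBy.pow_pow_of_eq_pow {a b : G} {r : ℕ} (h : SemiconjBy b a (a ^ r)) (k m : ℕ) :
    SemiconjBy (b ^ k) (a ^ m) (a ^ (m * r ^ k)) := by
  induction k with
  | zero => simp
  | succ k ih =>
    rw [show m * r ^ (k + 1) = r * (m * r ^ k) by ring, pow_mul, pow_succ']
    exact (h.pow_right _).mul_left ih

theorem SemiconjBy.pow_pow_of_eq_mul {a b c : G} (h : SemiconjBy a b (c * b))
    (hca : Commute c a) (hcb : Commute c b) (x y : ℕ) :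
    SemiconjBy (a ^ x) (b ^ y) (c ^ (x * y) * b ^ y) := by
  induction x with
  | zero => simp
  | succ x ih =>
    have step : SemiconjBy a (c ^ (x * y) * b ^ y) (c ^ ((x + 1) * y) * b ^ y) := by
      rw [add_one_mul, pow_add, mul_assoc, ← hcb.mul_pow y]
      exact SemiconjBy.mul_right (hca.symm.pow_right _) (h.pow_right y)
    rw [pow_succ']
    exact step.mul_left ih

theorem commutatorElement_pow_left {g a : G} (h : Commute ⁅g, a⁆ g) (k : ℕ) :
    ⁅g ^ k, a⁆ = ⁅g, a⁆ ^ k := by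
  induction k with
  | zero => simp
  | succ k ih =>
    calc ⁅g ^ (k + 1), a⁆ = g * ⁅g ^ k, a⁆ * g⁻¹ * ⁅g, a⁆ := by
          simp only [commutatorElement_def, pow_succ']; group
    _ = ⁅g, a⁆ ^ (k + 1) := by rw [ih, (h.pow_left k).symm.mul_inv_cancel, pow_succ]

theorem mul_pow_eq_commutatorElement_pow_mul {x y : G}
    (hx : Commute ⁅y, x⁆ x) (hy : Commute ⁅y, x⁆ y) (n : ℕ) :
    (x * y) ^ n = ⁅y, x⁆ ^ n.choose 2 * x ^ n * y ^ n := by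
  have hyx : SemiconjBy y x (⁅y, x⁆ * x) := by
    simp only [SemiconjBy, commutatorElement_def]; group
  induction n with
  | zero => simp
  | succ n ih =>
    have hsemi := hyx.pow_pow_of_eq_mul hy hx n 1
    rw [pow_one, mul_one, SemiconjBy] at hsemi
    calc (x * y) ^ (n + 1) = ⁅y, x⁆ ^ n.choose 2 * x ^ n * (y ^ n * x) * y := by
          rw [pow_succ, ih]; simp only [mul_assoc]
    _ = ⁅y, x⁆ ^ n.choose 2 * ⁅y, x⁆ ^ n * (x ^ n * x) * (y ^ n * y) := by
          rw [hsemi]; simp only [mul_assoc]; rw [(hx.pow_pow n n).symm.left_comm]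
    _ = ⁅y, x⁆ ^ (n + 1).choose 2 * x ^ (n + 1) * y ^ (n + 1) := by
          rw [← pow_add, ← pow_succ, ← pow_succ, Nat.choose_succ_succ' n 1,
            Nat.choose_one_right, Nat.add_comm n (n.choose _)]

end GroupLemmas

namespace Heis

variable {p : ℕ}

def mk (x y z : ZMod p) : Heis p :=
  ⟨!![1, x, z; 0, 1, y; 0, 0, 1], by simp⟩

theorem mk_entries (M : Heis p) : mk (M.1 0 1) (M.1 1 2) (M.1 0 2) = M := by
  obtain ⟨M, h00, h11, h22, h10, h20, h21⟩ := M
  refine Subtype.ext (Matrix.ext fun i j => ?_)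
  fin_cases i <;> fin_cases j <;> simp [mk, h00, h11, h22, h10, h20, h21]

def equivProd : Heis p ≃ ZMod p × ZMod p × ZMod p where
  toFun M := (M.1 0 1, M.1 1 2, M.1 0 2)
  invFun t := mk t.1 t.2.1 t.2.2
  left_inv := mk_entries
  right_inv t := by simp [mk]

theorem card : Nat.card (Heis p) = p ^ 3 := by
  rw [Nat.card_congr equivProd, Nat.card_prod, Nat.card_prod, Nat.card_zmod]
  ring

theorem mul_entries (M N : Heis p) :
    (M * N).1 0 1 = M.1 0 1 + N.1 0 1 ∧ (M * N).1 1 2 = M.1 1 2 + N.1 1 2 ∧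
      (M * N).1 0 2 = M.1 0 2 + N.1 0 2 + M.1 0 1 * N.1 1 2 := by
  obtain ⟨hM00, hM11, -, hM10, -, -⟩ := M.2
  obtain ⟨-, hN11, hN22, -, -, hN21⟩ := N.2
  simp only [mul_val, Matrix.mul_apply, Fin.sum_univ_three]
  refine ⟨?_, ?_, ?_⟩ <;> simp [hM00, hM11, hM10, hN11, hN22, hN21] <;> ring

variable [NeZero p] {G : Type*} [Group G]

def lift (a b c : G) (hab : a * b = c * b * a) (hca : Commute c a) (hcb : Commute c b)
    (ha : a ^ p = 1) (hb : b ^ p = 1) (hc : c ^ p = 1) : Heis p →* G where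
  toFun M := b ^ (M.1 1 2).val * a ^ (M.1 0 1).val * c ^ (M.1 0 2).val
  map_one' := by simp [one_val]
  map_mul' M N := by
    obtain ⟨h01, h12, h02⟩ := mul_entries M N
    set x := M.1 0 1; set y := M.1 1 2; set z := M.1 0 2
    set x' := N.1 0 1; set y' := N.1 1 2; set z' := N.1 0 2
    rw [h01, h12, h02, pow_eq_pow_of_natCast_eq hb (t := y.val + y'.val) (by simp),
      pow_eq_pow_of_natCast_eq ha (t := x.val + x'.val) (by simp),
      pow_eq_pow_of_natCast_eq hc (t := z.val + z'.val + x.val * y'.val) (by simp)]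
    have hsemi := (SemiconjBy.pow_pow_of_eq_mul hab hca hcb x.val y'.val).eq
    generalize x.val = X, y.val = Y, z.val = Z, x'.val = X', y'.val = Y', z'.val = Z' at *
    symm
    calc b ^ Y * a ^ X * c ^ Z * (b ^ Y' * a ^ X' * c ^ Z')
        = b ^ Y * (a ^ X * b ^ Y' * (a ^ X' * (c ^ Z * c ^ Z'))) := by
          simp only [mul_assoc]
          rw [(hcb.pow_pow Z Y').left_comm, (hca.pow_pow Z X').left_comm]
      _ = c ^ (X * Y') * (b ^ (Y + Y') * (a ^ (X + X') * c ^ (Z + Z'))) := by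
          rw [hsemi]
          simp only [pow_add, mul_assoc]
          rw [(hcb.pow_pow _ Y).symm.left_comm]
      _ = b ^ (Y + Y') * a ^ (X + X') * c ^ (Z + Z' + X * Y') := by
          rw [(hcb.pow_pow _ _).left_comm, (hca.pow_pow _ _).left_comm, ← pow_add,
            add_comm (X * Y'), mul_assoc]

theorem lift_mk (a b c : G) (hab : a * b = c * b * a) (hca : Commute c a) (hcb : Commute c b)
    (ha : a ^ p = 1) (hb : b ^ p = 1) (hc : c ^ p = 1) (x y z : ZMod p) :
    lift a b c hab hca hcb ha hb hc (mk x y z) = b ^ y.val * a ^ x.val * c ^ z.val :=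
  rfl

end Heis

namespace Mp

variable {p : ℕ}

def equivProd : Mp p ≃ ZMod (p ^ 2) × ZMod p where
  toFun x := (x.fst, x.snd)
  invFun y := ⟨y.1, y.2⟩

theorem card : Nat.card (Mp p) = p ^ 3 := by
  rw [Nat.card_congr equivProd, Nat.card_prod, Nat.card_zmod, Nat.card_zmod]
  ring

variable [NeZero p] {G : Type*} [Group G]

def lift (a b : G) (ha : a ^ p ^ 2 = 1) (hb : b ^ p = 1) (hba : b * a = a ^ (1 + p) * b) :
    Mp p →* G where
  toFun x := a ^ x.fst.val * b ^ x.snd.val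
  map_one' := by simp [one_def]
  map_mul' x y := by
    rw [mul_def, pow_eq_pow_of_natCast_eq hb (t := x.snd.val + y.snd.val) (by simp),
      pow_eq_pow_of_natCast_eq ha (t := x.fst.val + y.fst.val * (1 + p) ^ x.snd.val)
        (by simp [e, mul_comm]),
      pow_add, pow_add, mul_assoc, ← mul_assoc (a ^ _) (b ^ _),
      ← (SemiconjBy.pow_pow_of_eq_pow hba x.snd.val y.fst.val).eq]
    simp only [mul_assoc]

theorem lift_mk (a b : G) (ha : a ^ p ^ 2 = 1) (hb : b ^ p = 1) (hba : b * a = a ^ (1 + p) * b)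
    (x : ZMod (p ^ 2)) (k : ZMod p) : lift a b ha hb hba ⟨x, k⟩ = a ^ x.val * b ^ k.val :=
  rfl

end Mp

section OrderPrimeCube

open Subgroup

variable {p : ℕ} [hp : Fact p.Prime] {G : Type*} [Group G]

theorem isMulCommutative_of_card_dvd_prime_sq (hG : Nat.card G ∣ p ^ 2) :
    IsMulCommutative G := by
  obtain ⟨k, hk, hcard⟩ := (Nat.dvd_prime_pow hp.out).mp hG
  rcases Nat.lt_or_ge k 2 with hk1 | hk2
  · have : IsCyclic G := isCyclic_of_card_dvd_prime (p := p)
      (by rw [hcard]; exact (pow_dvd_pow p (by omega : k ≤ 1)).trans (pow_one p).dvd)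
    infer_instance
  · exact IsPGroup.isMulCommutative_of_card_eq_prime_sq (by rw [hcard, show k = 2 by omega])

variable (hG : Nat.card G = p ^ 3)
include hG

theorem Subgroup.eq_top_of_mem_of_not_commute {H : Subgroup G} {a b : G} (ha : a ∈ H)
    (hb : b ∈ H) (hab : a * b ≠ b * a) : H = ⊤ := by
  have : Finite G := Nat.finite_of_card_ne_zero (hG ▸ NeZero.ne _)
  obtain ⟨k, hk, hH⟩ := (Nat.dvd_prime_pow hp.out).mp (hG ▸ H.card_subgroup_dvd_card)
  rcases Nat.lt_or_ge k 3 with hk2 | hk3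
  · have : IsMulCommutative H := isMulCommutative_of_card_dvd_prime_sq (p := p)
      (hH ▸ pow_dvd_pow p (by omega))
    exact absurd (congrArg Subtype.val (isMulCommutative_iff.mp this ⟨a, ha⟩ ⟨b, hb⟩)) hab
  · exact H.eq_top_of_card_eq (by rw [hH, hG, show k = 3 by omega])

theorem nonempty_mulEquiv_of_mem_range {H : Type*} [Group H] (hH : Nat.card H = p ^ 3)
    (F : H →* G) {a b : G} (ha : a ∈ F.range) (hb : b ∈ F.range) (hab : a * b ≠ b * a) :
    Nonempty (G ≃* H) := by
  have : Finite H := Nat.finite_of_card_ne_zero (hH ▸ NeZero.ne _)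
  have hsurj : Function.Surjective F :=
    F.range_eq_top.mp (F.range.eq_top_of_mem_of_not_commute hG ha hb hab)
  exact ⟨(MulEquiv.ofBijective F ((Nat.bijective_iff_surjective_and_card F).mpr
    ⟨hsurj, by rw [hH, hG]⟩)).symm⟩

namespace NonabelianOrderPrimeCube

variable (hna : ¬ IsMulCommutative G)
include hna

theorem card_center_eq_prime : Nat.card (center G) = p := by
  obtain ⟨k, hk0, hk⟩ := IsPGroup.card_center_eq_prime_pow hG (by norm_num)
  have hidx := (center G).card_mul_index
  rw [hk, hG, index_eq_card] at hidx
  suffices k < 2 by rw [hk, show k = 1 by omega, pow_one]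
  by_contra! hk2
  -- a quotient by the center of order dividing `p` would be cyclic, forcing `G` to be abelian
  have hquot : Nat.card (G ⧸ center G) ∣ p := by
    refine (mul_dvd_mul_iff_left (pow_ne_zero 2 hp.out.ne_zero)).mp ?_
    calc p ^ 2 * Nat.card (G ⧸ center G) ∣ p ^ k * Nat.card (G ⧸ center G) :=
          mul_dvd_mul_right (pow_dvd_pow p hk2) _
    _ = p ^ 2 * p := by rw [hidx]; ring
  have := isCyclic_of_card_dvd_prime hquot
  exact hna (isMulCommutative_of_isCyclic_quotient_center_self G)

theorem card_quotient_center_eq_prime_sq : Nat.card (G ⧸ center G) = p ^ 2 := by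
  have hidx := (center G).card_mul_index
  rw [card_center_eq_prime hG hna, hG, index_eq_card] at hidx
  exact Nat.eq_of_mul_eq_mul_left hp.out.pos (by rw [hidx]; ring)

theorem commutatorElement_mem_center (x y : G) : ⁅x, y⁆ ∈ center G := by
  have := IsPGroup.isMulCommutative_of_card_eq_prime_sq (card_quotient_center_eq_prime_sq hG hna)
  rw [← QuotientGroup.eq_one_iff, ← QuotientGroup.mk'_apply, map_commutatorElement,
    commutatorElement_eq_one_iff_mul_comm]
  exact isMulCommutative_iff.mp this _ _

theorem pow_prime_mem_center (g : G) : g ^ p ∈ center G := by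
  have : Finite G := Nat.finite_of_card_ne_zero (hG ▸ NeZero.ne _)
  have hquot := card_quotient_center_eq_prime_sq hG hna
  obtain ⟨j, hj, hgj⟩ :=
    (Nat.dvd_prime_pow hp.out).mp (hquot ▸ orderOf_dvd_natCard (g : G ⧸ center G))
  have hj1 : j ≤ 1 := by
    by_contra! hj2
    have := isCyclic_of_orderOf_eq_card (g : G ⧸ center G)
      (by rw [hgj, hquot, show j = 2 by omega])
    exact hna (isMulCommutative_of_isCyclic_quotient_center_self G)
  rw [← QuotientGroup.eq_one_iff, QuotientGroup.mk_pow, ← orderOf_dvd_iff_pow_eq_one, hgj]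
  exact (pow_dvd_pow p hj1).trans (pow_one p).dvd

theorem pow_prime_eq_one_of_mem_center {z : G} (hz : z ∈ center G) : z ^ p = 1 := by
  have := pow_card_eq_one' (x := (⟨z, hz⟩ : center G))
  rwa [card_center_eq_prime hG hna, Subtype.ext_iff] at this

theorem center_eq_zpowers {z : G} (hz : z ∈ center G) (hz1 : z ≠ 1) : center G = zpowers z := by
  have : Finite G := Nat.finite_of_card_ne_zero (hG ▸ NeZero.ne _)
  refine (eq_of_le_of_card_ge (zpowers_le.mpr hz) ?_).symm
  rw [Nat.card_zpowers, orderOf_eq_prime (pow_prime_eq_one_of_mem_center hG hna hz) hz1,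
    card_center_eq_prime hG hna]

theorem mul_pow_prime (hodd : Odd p) (x y : G) : (x * y) ^ p = x ^ p * y ^ p := by
  have hc := commutatorElement_mem_center hG hna y x
  obtain ⟨m, hm⟩ : p ∣ p.choose 2 := hp.out.dvd_choose_self two_ne_zero
    (lt_of_le_of_ne hp.out.two_le (hodd.ne_two_of_dvd_nat dvd_rfl).symm)
  rw [mul_pow_eq_commutatorElement_pow_mul ((mem_center_iff.mp hc x).symm)
    ((mem_center_iff.mp hc y).symm), hm, pow_mul, pow_prime_eq_one_of_mem_center hG hna hc,
    one_pow, one_mul]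

theorem exists_pow_prime_eq_one_and_mul_eq (hodd : Odd p) {a : G} (ha : a ^ p ≠ 1) :
    ∃ b : G, b ^ p = 1 ∧ b * a = a ^ (1 + p) * b := by
  have : Finite G := Nat.finite_of_card_ne_zero (hG ▸ NeZero.ne _)
  have hcenter : center G = zpowers (a ^ p) :=
    center_eq_zpowers hG hna (pow_prime_mem_center hG hna a) ha
  obtain ⟨g, hg⟩ : ∃ g : G, ⁅g, a⁆ ≠ 1 := by
    by_contra! h
    refine ha (pow_prime_eq_one_of_mem_center hG hna (mem_center_iff.mpr fun g => ?_))
    exact commutatorElement_eq_one_iff_mul_comm.mp (h g)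
  have hga := commutatorElement_mem_center hG hna g a
  -- the commutator `⁅g, a⁆` also generates the center, so a power of `g` has commutator `a ^ p`
  obtain ⟨k, hk : ⁅g, a⁆ ^ k = a ^ p⟩ : a ^ p ∈ Submonoid.powers ⁅g, a⁆ := by
    rw [mem_powers_iff_mem_zpowers, ← center_eq_zpowers hG hna hga hg]
    exact pow_prime_mem_center hG hna a
  have hcomm : ⁅g ^ k, a⁆ = a ^ p := by
    rw [commutatorElement_pow_left (mem_center_iff.mp hga g).symm, hk]
  obtain ⟨u, hu : (a ^ p) ^ u = (g ^ k) ^ p⟩ : (g ^ k) ^ p ∈ Submonoid.powers (a ^ p) := by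
    rw [mem_powers_iff_mem_zpowers, ← hcenter]
    exact pow_prime_mem_center hG hna _
  refine ⟨g ^ k * (a ^ u)⁻¹, ?_, ?_⟩
  · rw [mul_pow_prime hG hna hodd, inv_pow, ← hu, ← pow_mul, ← pow_mul, mul_comm,
      mul_inv_cancel]
  · calc g ^ k * (a ^ u)⁻¹ * a = ⁅g ^ k, a⁆ * a * g ^ k * (a ^ u)⁻¹ := by
          rw [commutatorElement_def]; group
    _ = a ^ (1 + p) * (g ^ k * (a ^ u)⁻¹) := by rw [hcomm, add_comm, pow_succ]; group

theorem nonempty_mulEquiv_heis (hexp : ∀ g : G, g ^ p = 1) : Nonempty (G ≃* Heis p) := by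
  obtain ⟨a, b, hab⟩ : ∃ a b : G, a * b ≠ b * a := by simpa [isMulCommutative_iff] using hna
  have hc := commutatorElement_mem_center hG hna a b
  let F := Heis.lift (p := p) a b ⁅a, b⁆ (by rw [commutatorElement_def]; group)
    (mem_center_iff.mp hc a).symm (mem_center_iff.mp hc b).symm (hexp a) (hexp b) (hexp _)
  exact nonempty_mulEquiv_of_mem_range hG Heis.card F (a := a) (b := b)
    ⟨Heis.mk 1 0 0, (Heis.lift_mk ..).trans (by simp [ZMod.val_one])⟩
    ⟨Heis.mk 0 1 0, (Heis.lift_mk ..).trans (by simp [ZMod.val_one])⟩ hab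

theorem nonempty_mulEquiv_mp (hodd : Odd p) {a : G} (ha : a ^ p ≠ 1) :
    Nonempty (G ≃* Mp p) := by
  obtain ⟨b, hb, hba⟩ := exists_pow_prime_eq_one_and_mul_eq hG hna hodd ha
  have ha2 : a ^ p ^ 2 = 1 := by
    rw [sq, pow_mul]
    exact pow_prime_eq_one_of_mem_center hG hna (pow_prime_mem_center hG hna a)
  have : Fact (1 < p ^ 2) := ⟨Nat.one_lt_pow two_ne_zero hp.out.one_lt⟩
  refine nonempty_mulEquiv_of_mem_range hG Mp.card (Mp.lift a b ha2 hb hba) (a := a) (b := b)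
    ⟨⟨1, 0⟩, (Mp.lift_mk ..).trans (by simp [ZMod.val_one])⟩
    ⟨⟨0, 1⟩, (Mp.lift_mk ..).trans (by simp [ZMod.val_one])⟩ fun h => ha ?_
  have := mul_right_cancel (h.trans hba)
  rwa [pow_add, pow_one, eq_comm, mul_eq_left] at this

end NonabelianOrderPrimeCube

end OrderPrimeCube

/-- For an odd prime `p`, every nonabelian group of order `p^3` is
isomorphic either to the Heisenberg group `Heis p` or to the semidirect product `Mp p`;
in other words, up to isomorphism there are precisely two nonabelian groups of order `p^3`. -/
theorem nonabelian_group_of_order_p_cubed_classification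
    (p : ℕ) [Fact p.Prime] (hp : Odd p)
    (G : Type*) [Group G] (hcard : Nat.card G = p ^ 3)
    (hna : ¬ ∀ a b : G, a * b = b * a) :
    Nonempty (G ≃* Heis p) ∨ Nonempty (G ≃* Mp p) := by
  have hnc : ¬ IsMulCommutative G := by rwa [isMulCommutative_iff]
  by_cases hexp : ∀ g : G, g ^ p = 1
  · exact .inl (NonabelianOrderPrimeCube.nonempty_mulEquiv_heis hcard hnc hexp)
  · obtain ⟨a, ha⟩ := not_forall.mp hexp
    exact .inr (NonabelianOrderPrimeCube.nonempty_mulEquiv_mp hcard hnc hp ha)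
end

section
/- Let p be an odd prime. The commutator (derived) subgroup of the group M(p) equals its center; in particular it is cyclic of order p, generated by (p, 0). -/
/-- The central element `c = (p, 0)` of the group `M(p)`. -/
def mpC (p : ℕ) : Mp p := ⟨(p : ZMod (p ^ 2)), (0 : ZMod p)⟩

/-!
Since `(1 + p)^k = 1 + k p` in `ZMod (p²)`, the commutator of `(a, k)` and `(b, l)` is
`(p (k b - l a), 0)`. Hence every commutator lies in `p ZMod (p²) × 0`, which is the cyclic
group generated by `(p, 0) = ⁅(0, 1), (1, 0)⁆`. An element `(a, k)` is central iff its
commutators with `(1, 0)` and `(0, 1)` vanish, i.e. `p k = 0` and `p a = 0` in `ZMod (p²)`,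
i.e. `k = 0` and `a ∈ p ZMod (p²)`.
-/

open Subgroup
open scoped commutatorElement

namespace Mp

variable {p : ℕ}

theorem e_eq (k : ZMod p) : e p k = 1 + (k.val : ZMod (p ^ 2)) * p :=
  sq_zero_pow _ (p_sq_zero p) k.val

theorem e_zero : e p 0 = 1 := by
  simp [e]

theorem e_mul_e_neg (k : ZMod p) : e p k * e p (-k) = 1 := by
  rw [← e_add, add_neg_cancel, e_zero]

theorem natCast_mul_natCast_eq_zero_iff [NeZero p] (n : ℕ) :
    (p : ZMod (p ^ 2)) * n = 0 ↔ (n : ZMod p) = 0 := by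
  rw [← Nat.cast_mul, ZMod.natCast_eq_zero_iff, ZMod.natCast_eq_zero_iff, sq]
  exact Nat.mul_dvd_mul_iff_left (Nat.pos_of_neZero p)

theorem natCast_mul_eq_zero_iff [NeZero p] (a : ZMod (p ^ 2)) :
    (p : ZMod (p ^ 2)) * a = 0 ↔ ∃ m : ZMod (p ^ 2), a = (p : ZMod (p ^ 2)) * m := by
  refine ⟨fun h => ?_, ?_⟩
  · rw [← ZMod.natCast_zmod_val a, natCast_mul_natCast_eq_zero_iff,
      ZMod.natCast_eq_zero_iff] at h
    obtain ⟨t, ht⟩ := h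
    exact ⟨t, by rw [← ZMod.natCast_zmod_val a, ht, Nat.cast_mul]⟩
  · rintro ⟨m, rfl⟩
    rw [← mul_assoc, p_sq_zero, zero_mul]

theorem mk_eq_one_iff (a : ZMod (p ^ 2)) (k : ZMod p) :
    (⟨a, k⟩ : Mp p) = 1 ↔ a = 0 ∧ k = 0 :=
  Mp.ext_iff

theorem commutatorElement_eq (x y : Mp p) :
    ⁅x, y⁆ = ⟨(p : ZMod (p ^ 2)) * (x.snd.val * y.fst - y.snd.val * x.fst), 0⟩ := by
  rw [commutatorElement_def]
  simp only [mul_def, inv_def]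
  ext
  · simp only [e_add]
    linear_combination y.fst * e_eq x.snd - x.fst * e_eq y.snd -
      (e p y.snd * x.fst + y.fst) * e_mul_e_neg x.snd -
      y.fst * e p x.snd * e p (-x.snd) * e_mul_e_neg y.snd
  · dsimp
    ring

end Mp

theorem mpC_zpow (p : ℕ) (n : ℤ) : mpC p ^ n = ⟨(p : ZMod (p ^ 2)) * n, 0⟩ := by
  induction n using Int.induction_on with
  | zero => simp [Mp.one_def]
  | succ n ih =>
    rw [zpow_add_one, ih, mpC, Mp.mul_def, Mp.e_zero]
    ext <;> simp only [Int.cast_add, Int.cast_natCast, Int.cast_one] <;> ring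
  | pred n ih =>
    rw [zpow_sub_one, ih, mpC, Mp.inv_def, Mp.mul_def, neg_zero, Mp.e_zero]
    ext <;> simp only [Int.cast_sub, Int.cast_neg, Int.cast_natCast, Int.cast_one] <;> ring

theorem mem_zpowers_mpC_iff {p : ℕ} (x : Mp p) :
    x ∈ zpowers (mpC p) ↔ ∃ m : ZMod (p ^ 2), x = ⟨(p : ZMod (p ^ 2)) * m, 0⟩ := by
  simp only [mem_zpowers_iff, mpC_zpow, ZMod.intCast_surjective.exists, eq_comm]

theorem orderOf_mpC (p : ℕ) [NeZero p] : orderOf (mpC p) = p := by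
  have pow_eq_one_iff (n : ℕ) : mpC p ^ n = 1 ↔ p ∣ n := by
    rw [← zpow_natCast, mpC_zpow, Mp.mk_eq_one_iff, Int.cast_natCast,
      Mp.natCast_mul_natCast_eq_zero_iff, ZMod.natCast_eq_zero_iff]
    exact and_iff_left rfl
  exact Nat.dvd_antisymm (orderOf_dvd_of_pow_eq_one ((pow_eq_one_iff p).2 dvd_rfl))
    ((pow_eq_one_iff _).1 (pow_orderOf_eq_one _))

namespace Mp

variable {p : ℕ}

theorem mem_center_iff [Fact (1 < p)] (x : Mp p) :
    x ∈ center (Mp p) ↔ ∃ m : ZMod (p ^ 2), x = ⟨(p : ZMod (p ^ 2)) * m, 0⟩ := by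
  simp only [Subgroup.mem_center_iff, ← commutatorElement_eq_one_iff_mul_comm,
    commutatorElement_eq, mk_eq_one_iff, and_true]
  constructor
  · intro h
    have hsnd : x.snd = 0 := by
      simpa only [ZMod.val_zero, Nat.cast_zero, zero_mul, zero_sub, mul_one, mul_neg,
        neg_eq_zero, natCast_mul_natCast_eq_zero_iff, ZMod.natCast_zmod_val] using h ⟨1, 0⟩
    have h₂ := h ⟨0, 1⟩
    simp only [ZMod.val_one, Nat.cast_one, one_mul, mul_zero, sub_zero] at h₂
    obtain ⟨m, hm⟩ := (natCast_mul_eq_zero_iff x.fst).1 h₂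
    exact ⟨m, Mp.ext hm hsnd⟩
  · rintro ⟨m, rfl⟩ g
    rw [ZMod.val_zero, Nat.cast_zero]
    linear_combination (g.snd.val * m : ZMod (p ^ 2)) * p_sq_zero p

theorem center_eq_zpowers_mpC [Fact (1 < p)] : center (Mp p) = zpowers (mpC p) := by
  ext x
  rw [mem_center_iff, mem_zpowers_mpC_iff]

theorem commutatorElement_mk_zero_one_mk_one_zero [Fact (1 < p)] :
    ⁅(⟨0, 1⟩ : Mp p), ⟨1, 0⟩⁆ = mpC p := by
  rw [commutatorElement_eq, mpC]
  simp only [ZMod.val_one, ZMod.val_zero, Nat.cast_one, Nat.cast_zero, mul_one, mul_zero, sub_zero]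

theorem commutator_eq_zpowers_mpC [Fact (1 < p)] : commutator (Mp p) = zpowers (mpC p) := by
  apply le_antisymm
  · rw [commutator_def, Subgroup.commutator_le]
    intro x _ y _
    exact (mem_zpowers_mpC_iff _).2 ⟨_, commutatorElement_eq x y⟩
  · rw [zpowers_le, ← commutatorElement_mk_zero_one_mk_one_zero, commutator_def]
    exact commutator_mem_commutator (mem_top _) (mem_top _)

end Mp

theorem mp_commutator_eq_center_general (p : ℕ) [Fact p.Prime] :
    commutator (Mp p) = Subgroup.center (Mp p) ∧
    commutator (Mp p) = Subgroup.zpowers (mpC p) ∧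
    orderOf (mpC p) = p :=
  ⟨Mp.commutator_eq_zpowers_mpC.trans Mp.center_eq_zpowers_mpC.symm,
    Mp.commutator_eq_zpowers_mpC, orderOf_mpC p⟩

/-- For an odd prime `p`, the commutator (derived) subgroup of the
group `M(p)` equals its center; in particular it is cyclic of order `p`, generated by
`(p, 0)`. -/
theorem mp_commutator_eq_center (p : ℕ) [Fact p.Prime] (hp : Odd p) :
    commutator (Mp p) = Subgroup.center (Mp p) ∧
    commutator (Mp p) = Subgroup.zpowers (mpC p) ∧
    orderOf (mpC p) = p :=
  mp_commutator_eq_center_general p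
end

section
/- Let p be an odd prime, ω = exp(2πi/p). Let D be the p×p complex diagonal matrix with diagonal entries ω^0, ω^1, ..., ω^{p-1}, and let P be the p×p complex matrix with (i,j) entry equal to 1 if i ≡ j−1 (mod p) and 0 otherwise. For every matrix g ≠ I in the subgroup of GL_p(ℂ) generated by D and P, the fixed subspace {v ∈ ℂ^p : g·v = v} has dimension at most 1. Consequently, the set of vectors in ℂ^p fixed by some non-identity element of this subgroup is contained in a finite union of one-dimensional linear subspaces (the group acts freely outside a finite number of lines). -/
/-!
Every element of the group generated by the clock matrix `D` and the shift matrix `P` has the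
form `ω ^ c • (D ^ a * P ^ b)`, acting by `v ↦ (i ↦ ω ^ (c + a i) * v (i + b))`. If `p ∤ b`, a
fixed vector vanishing at one coordinate vanishes everywhere, since `i ↦ i + b` has a single
orbit on `Fin p`. If `p ∣ b` the element is diagonal, and unless it is `1` at most one diagonal
entry equals `1`, because `ω` is a primitive `p`-th root of unity. As the group is finite, the
fixed subspaces, all of dimension at most one, lie in finitely many lines.
-/

open Matrix Module
open Fin.NatCast

theorem Set.eq_univ_of_zero_mem_of_add_mem_of_prime_card {G : Type*} [AddGroup G] {p : ℕ}
    [Fact p.Prime] (hG : Nat.card G = p) {b : G} (hb : b ≠ 0) {Z : Set G} (h0 : 0 ∈ Z)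
    (hZ : ∀ i ∈ Z, i + b ∈ Z) : Z = Set.univ := by
  refine Set.eq_univ_of_forall fun j => ?_
  obtain ⟨k, rfl⟩ := mem_multiples_of_prime_card hG hb (g' := j)
  induction k with
  | zero => simpa using h0
  | succ k ih => simpa [succ_nsmul] using hZ _ ih

theorem Submodule.finrank_le_one_of_apply_eq_zero {k ι : Type*} [Field k] [Finite ι]
    (K : Submodule k (ι → k)) (i₀ : ι) (h : ∀ v ∈ K, v i₀ = 0 → v = 0) :
    finrank k K ≤ 1 := by
  have hinj : Function.Injective ((LinearMap.proj i₀ : (ι → k) →ₗ[k] k) ∘ₗ K.subtype) := by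
    rw [← LinearMap.ker_eq_bot, LinearMap.ker_eq_bot']
    exact fun v hv => Subtype.ext (h v v.2 hv)
  simpa using LinearMap.finrank_le_finrank_of_injective hinj

theorem Submodule.exists_finrank_eq_one_le {k V : Type*} [Field k] [AddCommGroup V] [Module k V]
    [Nontrivial V] [FiniteDimensional k V] {K : Submodule k V} (hK : finrank k K ≤ 1) :
    ∃ W : Submodule k V, finrank k W = 1 ∧ K ≤ W := by
  rcases hK.lt_or_eq with hK | hK
  · obtain ⟨v, hv⟩ := exists_ne (0 : V)
    refine ⟨k ∙ v, finrank_span_singleton hv, ?_⟩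
    rw [Submodule.finrank_eq_zero.mp (show finrank k K = 0 by omega)]
    exact bot_le
  · exact ⟨K, hK, le_rfl⟩

theorem exists_finset_finrank_eq_one_iUnion_subset {k V ι : Type*} [Field k] [AddCommGroup V]
    [Module k V] [Nontrivial V] [FiniteDimensional k V] [Finite ι] (K : ι → Submodule k V)
    (hK : ∀ i, finrank k (K i) ≤ 1) :
    ∃ s : Finset (Submodule k V), (∀ W ∈ s, finrank k W = 1) ∧
      ⋃ i, (K i : Set V) ⊆ ⋃ W ∈ s, (W : Set V) := by
  classical
  have := Fintype.ofFinite ι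
  choose W hW hKW using fun i => Submodule.exists_finrank_eq_one_le (hK i)
  refine ⟨Finset.univ.image W, by simpa using hW, ?_⟩
  simp only [Set.iUnion_subset_iff]
  intro i v hv
  exact Set.mem_biUnion (Finset.mem_coe.2 (Finset.mem_image_of_mem W (Finset.mem_univ i)))
    (hKW i hv)

theorem mem_ker_mulVecLin_sub_id {k ι : Type*} [CommRing k] [Fintype ι] (M : Matrix ι ι k)
    (v : ι → k) :
    v ∈ LinearMap.ker (M.mulVecLin - LinearMap.id) ↔ M *ᵥ v = v := by
  simp [sub_eq_zero]

theorem IsPrimitiveRoot.subsingleton_setOf_pow_add_mul_eq_one {K : Type*} [Field K] {ω : K}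
    {n : ℕ} [Fact n.Prime] (hω : IsPrimitiveRoot ω n) {a c : ℕ}
    (hne : ∃ j : Fin n, ω ^ (c + a * (j : ℕ)) ≠ 1) :
    {i : Fin n | ω ^ (c + a * (i : ℕ)) = 1}.Subsingleton := by
  intro i (hi : ω ^ _ = 1) j (hj : ω ^ _ = 1)
  rw [hω.pow_eq_one_iff_dvd] at hi hj
  by_cases ha : n ∣ a
  · obtain ⟨k, hk⟩ := hne
    rw [Ne, hω.pow_eq_one_iff_dvd] at hk
    have hc : n ∣ c := (Nat.dvd_add_left (ha.mul_right _)).1 hi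
    exact absurd (dvd_add hc (ha.mul_right _)) hk
  · rw [← ZMod.natCast_eq_zero_iff] at hi hj ha
    push_cast at hi hj
    have hij : ((i : ℕ) : ZMod n) = (j : ℕ) :=
      mul_left_cancel₀ ha (by linear_combination hi - hj)
    rw [ZMod.natCast_eq_natCast_iff', Nat.mod_eq_of_lt i.isLt, Nat.mod_eq_of_lt j.isLt] at hij
    exact Fin.ext hij

namespace Heisenberg

variable {R : Type*} [CommRing R] {n : ℕ}

def clockMatrix (ω : R) : Matrix (Fin n) (Fin n) R := diagonal fun i => ω ^ (i : ℕ)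

theorem clockMatrix_pow_mulVec_apply (ω : R) (a : ℕ) (v : Fin n → R) (i : Fin n) :
    (clockMatrix ω ^ a *ᵥ v) i = ω ^ (a * i) * v i := by
  rw [clockMatrix, diagonal_pow, mulVec_diagonal, Pi.pow_apply, ← pow_mul, Nat.mul_comm]

variable [NeZero n]

def shiftMatrix : Matrix (Fin n) (Fin n) R := of fun i j => if i = j - 1 then 1 else 0

def heisMatrix (ω : R) (a b c : ℕ) : Matrix (Fin n) (Fin n) R :=
  ω ^ c • (clockMatrix ω ^ a * shiftMatrix ^ b)

theorem shiftMatrix_mulVec_apply (v : Fin n → R) (i : Fin n) :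
    (shiftMatrix *ᵥ v) i = v (i + 1) := by
  simp [shiftMatrix, mulVec, dotProduct, eq_sub_iff_add_eq]

theorem shiftMatrix_pow_mulVec_apply (b : ℕ) (v : Fin n → R) (i : Fin n) :
    (shiftMatrix ^ b *ᵥ v) i = v (i + b) := by
  induction b generalizing i with
  | zero => simp
  | succ b ih =>
    rw [pow_succ', ← mulVec_mulVec, shiftMatrix_mulVec_apply, ih, Nat.cast_succ,
      add_comm (b : Fin n), add_assoc]

theorem heisMatrix_mulVec_apply (ω : R) (a b c : ℕ) (v : Fin n → R) (i : Fin n) :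
    (heisMatrix ω a b c *ᵥ v) i = ω ^ (c + a * i) * v (i + b) := by
  rw [heisMatrix, smul_mulVec, Pi.smul_apply, ← mulVec_mulVec, clockMatrix_pow_mulVec_apply,
    shiftMatrix_pow_mulVec_apply, smul_eq_mul, pow_add, mul_assoc]

variable {ω : R}

theorem heisMatrix_mul (hω : ω ^ n = 1) (a b c a' b' c' : ℕ) :
    heisMatrix ω a b c * heisMatrix ω a' b' c' =
      (heisMatrix ω (a + a') (b + b') (c + c' + b * a') : Matrix (Fin n) (Fin n) R) := by
  refine ext_iff_mulVec.2 fun v => funext fun i => ?_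
  rw [← mulVec_mulVec, heisMatrix_mulVec_apply, heisMatrix_mulVec_apply, heisMatrix_mulVec_apply,
    ← mul_assoc, ← pow_add]
  congr 1
  · refine pow_eq_pow_of_modEq ?_ hω
    rw [← ZMod.natCast_eq_natCast_iff]
    push_cast [Fin.val_add, Fin.val_natCast, ZMod.natCast_mod]
    ring
  · rw [Nat.cast_add, add_assoc]

theorem heisMatrix_mod (hω : ω ^ n = 1) (a b c : ℕ) :
    (heisMatrix ω a b c : Matrix (Fin n) (Fin n) R) = heisMatrix ω (a % n) (b % n) (c % n) := by
  refine ext_iff_mulVec.2 fun v => funext fun i => ?_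
  rw [heisMatrix_mulVec_apply, heisMatrix_mulVec_apply,
    pow_eq_pow_of_modEq (b := c % n + a % n * i) ?_ hω]
  · have hb : ((b % n : ℕ) : Fin n) = b := Fin.ext (by simp [Fin.val_natCast])
    rw [hb]
  · rw [← ZMod.natCast_eq_natCast_iff]
    push_cast [ZMod.natCast_mod]
    rfl

theorem heisMatrix_eq_one (hω : ω ^ n = 1) {a b c : ℕ} (ha : n ∣ a) (hb : n ∣ b) (hc : n ∣ c) :
    (heisMatrix ω a b c : Matrix (Fin n) (Fin n) R) = 1 := by
  rw [heisMatrix_mod hω, Nat.mod_eq_zero_of_dvd ha, Nat.mod_eq_zero_of_dvd hb,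
    Nat.mod_eq_zero_of_dvd hc]
  simp [heisMatrix]

theorem heisMatrix_eq_diagonal {b : ℕ} (hb : n ∣ b) (ω : R) (a c : ℕ) :
    (heisMatrix ω a b c : Matrix (Fin n) (Fin n) R) =
      diagonal fun i : Fin n => ω ^ (c + a * (i : ℕ)) := by
  refine ext_iff_mulVec.2 fun v => funext fun i => ?_
  rw [heisMatrix_mulVec_apply, mulVec_diagonal, Fin.natCast_eq_zero.2 hb, add_zero]

-- The product has exponents `n * a`, `n * b` and `n * (c + a * b)`.
theorem heisMatrix_mul_eq_one (hω : ω ^ n = 1) (a b c : ℕ) :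
    (heisMatrix ω a b c * heisMatrix ω ((n - 1) * a) ((n - 1) * b) ((n - 1) * c + a * b) :
      Matrix (Fin n) (Fin n) R) = 1 := by
  rw [heisMatrix_mul hω]
  obtain ⟨m, rfl⟩ : ∃ m, n = m + 1 := ⟨n - 1, (Nat.sub_add_cancel NeZero.one_le).symm⟩
  simp only [Nat.add_sub_cancel]
  exact heisMatrix_eq_one hω ⟨a, by ring⟩ ⟨b, by ring⟩ ⟨c + a * b, by ring⟩

theorem exists_heisMatrix_of_mem_closure (hω : ω ^ n = 1) {D P : (Matrix (Fin n) (Fin n) R)ˣ}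
    (hD : (D : Matrix (Fin n) (Fin n) R) = clockMatrix ω)
    (hP : (P : Matrix (Fin n) (Fin n) R) = shiftMatrix) {g : (Matrix (Fin n) (Fin n) R)ˣ}
    (hg : g ∈ Subgroup.closure {D, P}) :
    ∃ a b c : ℕ, (g : Matrix (Fin n) (Fin n) R) = heisMatrix ω a b c := by
  induction hg using Subgroup.closure_induction with
  | mem x hx =>
    rcases hx with rfl | rfl
    · exact ⟨1, 0, 0, by simp [heisMatrix, hD]⟩
    · exact ⟨0, 1, 0, by simp [heisMatrix, hP]⟩
  | one => exact ⟨0, 0, 0, by simp [heisMatrix]⟩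
  | mul x y _ _ hx hy =>
    obtain ⟨a, b, c, hx⟩ := hx
    obtain ⟨a', b', c', hy⟩ := hy
    exact ⟨_, _, _, by rw [Units.val_mul, hx, hy, heisMatrix_mul hω]⟩
  | inv x _ hx =>
    obtain ⟨a, b, c, hx⟩ := hx
    exact ⟨_, _, _, Units.inv_eq_of_mul_eq_one_right (hx ▸ heisMatrix_mul_eq_one hω a b c)⟩

theorem finite_closure (hω : ω ^ n = 1) {D P : (Matrix (Fin n) (Fin n) R)ˣ}
    (hD : (D : Matrix (Fin n) (Fin n) R) = clockMatrix ω)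
    (hP : (P : Matrix (Fin n) (Fin n) R) = shiftMatrix) :
    (Subgroup.closure {D, P} : Set (Matrix (Fin n) (Fin n) R)ˣ).Finite := by
  refine ((Set.finite_range fun t : Fin n × Fin n × Fin n =>
    (heisMatrix ω t.1 t.2.1 t.2.2 : Matrix (Fin n) (Fin n) R)).preimage
      Units.val_injective.injOn).subset fun g hg => ?_
  obtain ⟨a, b, c, hg⟩ := exists_heisMatrix_of_mem_closure hω hD hP hg
  exact ⟨(a, b, c), by simp [Fin.val_natCast, hg, ← heisMatrix_mod hω]⟩

section Field

variable {K : Type*} [Field K] {ω : K}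

theorem finrank_ker_heisMatrix_le_one_of_not_dvd [Fact n.Prime] (hω : ω ≠ 0) {a b c : ℕ}
    (hb : ¬ n ∣ b) :
    finrank K (LinearMap.ker ((heisMatrix ω a b c : Matrix (Fin n) (Fin n) K).mulVecLin
      - LinearMap.id)) ≤ 1 := by
  refine Submodule.finrank_le_one_of_apply_eq_zero _ 0 fun v hv hv0 => funext fun i => ?_
  have hfix (i : Fin n) : ω ^ (c + a * i) * v (i + b) = v i := by
    rw [← heisMatrix_mulVec_apply, (mem_ker_mulVecLin_sub_id _ v).1 hv]
  have hzero := Set.eq_univ_of_zero_mem_of_add_mem_of_prime_card (Z := {i | v i = 0})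
    (Nat.card_fin n) (Fin.natCast_eq_zero.not.2 hb) hv0 fun i (hi : v i = 0) => by
      simpa [hω, hi] using hfix i
  exact Set.eq_univ_iff_forall.1 hzero i

theorem finrank_ker_diagonal_mulVecLin_sub_id_le_one {ι : Type*} [Fintype ι] [DecidableEq ι]
    [Nonempty ι] {d : ι → K} (hd : {i | d i = 1}.Subsingleton) :
    finrank K (LinearMap.ker ((diagonal d).mulVecLin - LinearMap.id)) ≤ 1 := by
  obtain ⟨i₀, hi₀⟩ : ∃ i₀, ∀ i, d i = 1 → i = i₀ := by
    by_cases h : ∃ j, d j = 1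
    · obtain ⟨j, hj⟩ := h
      exact ⟨j, fun i hi => hd hi hj⟩
    · simp only [not_exists] at h
      exact ⟨Classical.arbitrary ι, fun i hi => absurd hi (h i)⟩
  refine Submodule.finrank_le_one_of_apply_eq_zero _ i₀ fun v hv hv0 => funext fun i => ?_
  by_contra hvi
  have hdi : d i * v i = v i := by
    rw [← mulVec_diagonal, (mem_ker_mulVecLin_sub_id _ v).1 hv]
  exact hvi (hi₀ i ((mul_eq_right₀ hvi).1 hdi) ▸ hv0)

theorem finrank_ker_heisMatrix_le_one [Fact n.Prime] (hω : IsPrimitiveRoot ω n) {a b c : ℕ}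
    (hne : (heisMatrix ω a b c : Matrix (Fin n) (Fin n) K) ≠ 1) :
    finrank K (LinearMap.ker ((heisMatrix ω a b c : Matrix (Fin n) (Fin n) K).mulVecLin
      - LinearMap.id)) ≤ 1 := by
  by_cases hb : n ∣ b
  · rw [heisMatrix_eq_diagonal hb] at hne ⊢
    refine finrank_ker_diagonal_mulVecLin_sub_id_le_one
      (hω.subsingleton_setOf_pow_add_mul_eq_one ?_)
    by_contra! h
    exact hne (by rw [← diagonal_one]; exact congrArg diagonal (funext h))
  · exact finrank_ker_heisMatrix_le_one_of_not_dvd (hω.ne_zero (Fact.out : n.Prime).ne_zero) hb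

end Field

end Heisenberg

theorem heis_rep_acts_freely_off_lines_general (p : ℕ) [Fact p.Prime]
    (ω : ℂ) (hω : ω = Complex.exp (2 * Real.pi * Complex.I / p))
    (D P : (Matrix (Fin p) (Fin p) ℂ)ˣ)
    (hD : (D : Matrix (Fin p) (Fin p) ℂ) = Matrix.diagonal fun i : Fin p => ω ^ (i : ℕ))
    (hP : (P : Matrix (Fin p) (Fin p) ℂ)
        = Matrix.of fun i j : Fin p => if i = j - 1 then (1 : ℂ) else 0) :
    (∀ g ∈ Subgroup.closure {D, P}, g ≠ 1 →
      Module.finrank ℂ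
        (LinearMap.ker ((g : Matrix (Fin p) (Fin p) ℂ).mulVecLin
          - (LinearMap.id : (Fin p → ℂ) →ₗ[ℂ] (Fin p → ℂ)))) ≤ 1) ∧
    ∃ s : Finset (Submodule ℂ (Fin p → ℂ)),
      (∀ W ∈ s, Module.finrank ℂ W = 1) ∧
      {v : Fin p → ℂ | ∃ g ∈ Subgroup.closure {D, P}, g ≠ 1 ∧
          (g : Matrix (Fin p) (Fin p) ℂ).mulVec v = v}
        ⊆ ⋃ W ∈ s, (W : Set (Fin p → ℂ)) := by
  have hprim : IsPrimitiveRoot ω p := hω ▸ Complex.isPrimitiveRoot_exp p (NeZero.ne p)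
  have hfixed (g : (Matrix (Fin p) (Fin p) ℂ)ˣ) (hg : g ∈ Subgroup.closure {D, P}) (hg1 : g ≠ 1) :
      finrank ℂ (LinearMap.ker ((g : Matrix (Fin p) (Fin p) ℂ).mulVecLin - LinearMap.id)) ≤ 1 := by
    obtain ⟨a, b, c, hga⟩ :=
      Heisenberg.exists_heisMatrix_of_mem_closure hprim.pow_eq_one hD hP hg
    rw [hga]
    exact Heisenberg.finrank_ker_heisMatrix_le_one hprim (hga ▸ Units.val_eq_one.not.2 hg1)
  refine ⟨hfixed, ?_⟩
  have := (Heisenberg.finite_closure hprim.pow_eq_one hD hP).to_subtype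
  obtain ⟨s, hs, hcover⟩ := exists_finset_finrank_eq_one_iUnion_subset
    (fun g : {g : Subgroup.closure {D, P} // g ≠ 1} =>
      LinearMap.ker (((g : (Matrix (Fin p) (Fin p) ℂ)ˣ) : Matrix (Fin p) (Fin p) ℂ).mulVecLin
        - LinearMap.id))
    fun g => hfixed g g.1.2 (Subtype.coe_ne_coe.2 g.2)
  refine ⟨s, hs, fun v ⟨g, hg, hg1, hgv⟩ => hcover (Set.mem_iUnion.2 ⟨⟨⟨g, hg⟩, ?_⟩, ?_⟩)⟩
  · exact Subtype.coe_ne_coe.1 hg1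
  · exact (mem_ker_mulVecLin_sub_id _ v).2 hgv

/-- Let `p` be an odd prime, `ω = exp(2πi/p)`, `D` the diagonal
matrix with entries `ω^0, …, ω^(p-1)` and `P` the cyclic permutation matrix, both
viewed as units of the matrix ring.  Every non-identity element `g` of the subgroup
generated by `D` and `P` has fixed subspace `{v : g·v = v}` of dimension at most `1`;
consequently the set of vectors fixed by some non-identity element of this subgroup is
contained in a finite union of one-dimensional linear subspaces. -/
theorem heis_rep_acts_freely_off_lines (p : ℕ) [Fact p.Prime] (hp : Odd p)
    (ω : ℂ) (hω : ω = Complex.exp (2 * Real.pi * Complex.I / p))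
    (D P : (Matrix (Fin p) (Fin p) ℂ)ˣ)
    (hD : (D : Matrix (Fin p) (Fin p) ℂ) = Matrix.diagonal fun i : Fin p => ω ^ (i : ℕ))
    (hP : (P : Matrix (Fin p) (Fin p) ℂ)
        = Matrix.of fun i j : Fin p => if i = j - 1 then (1 : ℂ) else 0) :
    (∀ g ∈ Subgroup.closure {D, P}, g ≠ 1 →
      Module.finrank ℂ
        (LinearMap.ker ((g : Matrix (Fin p) (Fin p) ℂ).mulVecLin
          - (LinearMap.id : (Fin p → ℂ) →ₗ[ℂ] (Fin p → ℂ)))) ≤ 1) ∧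
    ∃ s : Finset (Submodule ℂ (Fin p → ℂ)),
      (∀ W ∈ s, Module.finrank ℂ W = 1) ∧
      {v : Fin p → ℂ | ∃ g ∈ Subgroup.closure {D, P}, g ≠ 1 ∧
          (g : Matrix (Fin p) (Fin p) ℂ).mulVec v = v}
        ⊆ ⋃ W ∈ s, (W : Set (Fin p → ℂ)) :=
  heis_rep_acts_freely_off_lines_general p ω hω D P hD hP
end
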